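/- Let G be a group, let {H_λ}_{λ∈Λ} be a family of subgroups of G, and for each λ let N_λ be a nontrivial normal subgroup of H_λ. Let N = ⋃_{λ∈Λ} N_λ, ⟪N⟫ the normal closure of N in G, Q = G/⟪N⟫, and R_λ = H_λ/N_λ, each R_λ being identified with a subgroup of Q via the (injective) natural homomorphism. If the triple (G, {H_λ}_{λ∈Λ}, {N_λ}_{λ∈Λ}) has the Cohen-Lyndon property, then there is an isomorphism of ℤQ-modules Rel(G, ⟪N⟫) ≅ ⨁_{λ∈Λ} (ℤQ ⊗_{ℤR_λ} Rel(H_λ, N_λ)). -/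

import Mathlib

/-- A subset `T` of `G` is a left transversal of a subgroup `K` if every left coset
of `K` in `G` contains exactly one element of `T`. -/
def IsLeftTransversal {G : Type*} [Group G] (K : Subgroup G) (T : Set G) : Prop :=
  ∀ g : G, ∃! t : G, t ∈ T ∧ t⁻¹ * g ∈ K

/-- The normal closure in `G` of (the subgroup generated by) the union of a family of
subgroups `N i`. -/
abbrev familyNC {G : Type*} [Group G] {ι : Type*} (N : ι → Subgroup G) : Subgroup G :=
  Subgroup.normalClosure (⋃ i, (N i : Set G))

/-- The triple `(G, {H i}, {N i})` has the Cohen-Lyndon property, witnessed by the left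
transversals `T i` of `H i ⟪N⟫` in `G`: the canonical homomorphism from the free product
of the conjugates `t (N i) t⁻¹`, indexed by pairs `(i, t)` with `t ∈ T i`, to `G` is
injective with image the normal closure `⟪N⟫`. -/
def CohenLyndonFamilyWith {G : Type*} [Group G] {ι : Type*}
    (H : ι → Subgroup G) (N : ι → Subgroup G) (T : ι → Set G) : Prop :=
  (∀ i, IsLeftTransversal (H i ⊔ familyNC N) (T i)) ∧
  Function.Injective (Monoid.CoprodI.lift
    fun p : (Σ i, ↥(T i)) => ((N p.1).map (MulAut.conj (p.2 : G)).toMonoidHom).subtype) ∧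
  (Monoid.CoprodI.lift
    fun p : (Σ i, ↥(T i)) => ((N p.1).map (MulAut.conj (p.2 : G)).toMonoidHom).subtype).range
    = familyNC N

/-- The triple `(G, {H i}, {N i})` has the Cohen-Lyndon property. -/
def CohenLyndonFamily {G : Type*} [Group G] {ι : Type*}
    (H : ι → Subgroup G) (N : ι → Subgroup G) : Prop :=
  ∃ T : ι → Set G, CohenLyndonFamilyWith H N T

open scoped TensorProduct DirectSum

/-- The `ℤQ`-submodule of relations defining the induced module
`ℤQ ⊗_{ℤR} Rel(A, N)` (where `R = A/N` maps to `Q` via the homomorphism induced by `f`)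
as a quotient of `ℤQ ⊗_ℤ Rel(A, N)`; here `Rel(A, N)` is the abelianization of `N`,
on which `h ∈ A` acts by conjugation. -/
noncomputable def relSub (Q : Type*) [Group Q] (A : Type*) [Group A]
    (N : Subgroup A) [N.Normal] (f : A →* Q) :
    Submodule (MonoidAlgebra ℤ Q)
      (MonoidAlgebra ℤ Q ⊗[ℤ] Additive (Abelianization ↥N)) :=
  Submodule.span (MonoidAlgebra ℤ Q)
    {x | ∃ (a : MonoidAlgebra ℤ Q) (h : A) (m : Additive (Abelianization ↥N)),
      x = (a * MonoidAlgebra.of ℤ Q (f h)) ⊗ₜ[ℤ] m -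
        a ⊗ₜ[ℤ] Additive.ofMul ((Abelianization.map (MulAut.conjNormal h).toMonoidHom)
          (Additive.toMul m))}

/-- `Rel(G, K)` (the abelianization of `K`, with the `Q = G/K` action induced by
conjugation) is isomorphic, as a `ℤQ`-module, to the direct sum over `i` of the induced
modules `ℤQ ⊗_{ℤR_i} Rel(A i, N i)`: there is an additive isomorphism which intertwines
the conjugation action of `G` (inducing the `Q`-action on the left) with multiplication
by group elements of `Q` in the group ring (the `Q`-action on the right). -/
noncomputable def RelModuleIsoIndFam (G : Type*) [Group G] {ι : Type*} {A : ι → Type*}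
    [∀ i, Group (A i)] (f : ∀ i, A i →* G) (N : ∀ i, Subgroup (A i)) [∀ i, (N i).Normal]
    (K : Subgroup G) [K.Normal] : Prop :=
  ∃ e : Additive (Abelianization ↥K) ≃+
      (⨁ i, ((MonoidAlgebra ℤ (G ⧸ K) ⊗[ℤ] Additive (Abelianization ↥(N i))) ⧸
        relSub (G ⧸ K) (A i) (N i) ((QuotientGroup.mk' K).comp (f i)))),
    ∀ (g : G) (x : Additive (Abelianization ↥K)),
      e (Additive.ofMul ((Abelianization.map (MulAut.conjNormal g).toMonoidHom)
          (Additive.toMul x))) =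
        MonoidAlgebra.of ℤ (G ⧸ K) (QuotientGroup.mk g) • e x

/-!
The map `ℤQ ⊗ Rel(H i, N i) → Rel(G, ⟪N⟫)`, `q ⊗ n ↦ q · n`, kills the relations defining the
induced module, so the induced modules map `ℤQ`-linearly to `Rel(G, ⟪N⟫)`. The Cohen–Lyndon
property identifies `⟪N⟫` with the free product of the conjugates `t (N i) t⁻¹`, `t ∈ T i`, whose
abelianization is the direct sum of the abelianizations of the factors; sending the class of
`t n t⁻¹` to `t ⊗ n` is therefore an additive inverse. It is a left inverse on the generators
`g ⊗ n` because every `g` is `t h k` with `t ∈ T i`, `h ∈ H i`, `k ∈ ⟪N⟫`, and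
`g ⊗ n = t ⊗ h n h⁻¹` in the induced module.
-/

open TensorProduct

namespace Abelianization

lemma exists_ofMul_of_eq {A : Type*} [Group A] (x : Additive (Abelianization A)) :
    ∃ a : A, .ofMul (of a) = x :=
  QuotientGroup.mk_surjective x.toMul

lemma additive_linearMap_ext {A V : Type*} [Group A] [AddCommGroup V]
    {f g : Additive (Abelianization A) →ₗ[ℤ] V}
    (h : ∀ a, f (.ofMul (of a)) = g (.ofMul (of a))) : f = g :=
  LinearMap.ext fun x => by
    obtain ⟨a, rfl⟩ := exists_ofMul_of_eq x
    exact h a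

end Abelianization

namespace RelModule

section Conjugation

variable {G : Type*} [Group G] (K : Subgroup G) [K.Normal]

noncomputable def conjRep : Representation ℤ G (Additive (Abelianization K)) where
  toFun g := (Abelianization.map (MulAut.conjNormal g).toMonoidHom).toAdditive.toIntLinearMap
  map_one' := Abelianization.additive_linearMap_ext fun _ => by simp
  map_mul' _ _ := Abelianization.additive_linearMap_ext fun _ => by simp

lemma conjRep_of (g : G) (k : K) :
    conjRep K g (.ofMul (Abelianization.of k)) =
      .ofMul (Abelianization.of (MulAut.conjNormal g k)) :=
  rfl

lemma conjRep_eq_one_of_mem {k : G} (hk : k ∈ K) : conjRep K k = 1 :=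
  Abelianization.additive_linearMap_ext fun x => by
    have : MulAut.conjNormal k x = ⟨k, hk⟩ * x * (⟨k, hk⟩ : K)⁻¹ := by ext; simp
    rw [conjRep_of, this, Module.End.one_apply]
    exact congrArg Additive.ofMul (by rw [map_mul, map_mul, map_inv, mul_inv_cancel_comm])

noncomputable def quotConjRep : Representation ℤ (G ⧸ K) (Additive (Abelianization K)) :=
  QuotientGroup.lift K (conjRep K) fun _ hk => conjRep_eq_one_of_mem K hk

lemma quotConjRep_mk (g : G) : quotConjRep K g = conjRep K g := rfl

end Conjugation

section InducedRel

variable {Q : Type*} [Group Q] {V W : Type*} [AddCommGroup V] [AddCommGroup W]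
  (ρ : Representation ℤ Q V) (φ : W →ₗ[ℤ] V)

noncomputable def tensorLift : MonoidAlgebra ℤ Q ⊗[ℤ] W →ₗ[MonoidAlgebra ℤ Q] ρ.asModule :=
  AlgebraTensorModule.lift <| LinearMap.toSpanSingleton (MonoidAlgebra ℤ Q) (W →ₗ[ℤ] ρ.asModule)
    (ρ.asModuleEquiv.symm.toLinearMap ∘ₗ φ)

lemma tensorLift_tmul (a : MonoidAlgebra ℤ Q) (w : W) :
    tensorLift ρ φ (a ⊗ₜ w) = a • ρ.asModuleEquiv.symm (φ w) :=
  rfl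

variable {A : Type*} [Group A] (N : Subgroup A) [N.Normal] (f : A →* Q)

abbrev InducedRel : Type _ :=
  (MonoidAlgebra ℤ Q ⊗[ℤ] Additive (Abelianization N)) ⧸ relSub Q A N f

/- `relSub` is a submodule for the `AddCommMonoid` structure of the tensor product, so instance
search does not find this group structure under the binder of `⨁ i, InducedRel (N i) (f i)`. -/
noncomputable instance : AddCommGroup (InducedRel N f) :=
  Submodule.Quotient.addCommGroup _

lemma InducedRel.mk_mul_of_tmul (a : MonoidAlgebra ℤ Q) (h : A)
    (m : Additive (Abelianization N)) :
    (Submodule.Quotient.mk ((a * MonoidAlgebra.of ℤ Q (f h)) ⊗ₜ[ℤ] m) : InducedRel N f) =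
      Submodule.Quotient.mk (a ⊗ₜ[ℤ] conjRep N h m) :=
  (Submodule.Quotient.eq _).2 (Submodule.subset_span ⟨a, h, m, rfl⟩)

variable {ρ N f} {φ : Additive (Abelianization N) →ₗ[ℤ] V}

lemma relSub_le_ker_tensorLift (hφ : ∀ h m, φ (conjRep N h m) = ρ (f h) (φ m)) :
    relSub Q A N f ≤ LinearMap.ker (tensorLift ρ φ) := by
  refine Submodule.span_le.2 ?_
  rintro _ ⟨a, h, m, rfl⟩
  change tensorLift ρ φ ((a * _) ⊗ₜ m - a ⊗ₜ conjRep N h m) = 0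
  rw [map_sub, tensorLift_tmul, tensorLift_tmul, mul_smul,
    ← Representation.asModuleEquiv_symm_map_rho, hφ, sub_self]

noncomputable def InducedRel.lift (hφ : ∀ h m, φ (conjRep N h m) = ρ (f h) (φ m)) :
    InducedRel N f →ₗ[MonoidAlgebra ℤ Q] ρ.asModule :=
  (relSub Q A N f).liftQ (tensorLift ρ φ) (relSub_le_ker_tensorLift hφ)

end InducedRel

lemma sumInducedRel_addHom_ext {Q : Type*} [Group Q] {ι : Type*} [DecidableEq ι]
    {A : ι → Type*} [∀ i, Group (A i)] {N : ∀ i, Subgroup (A i)} [∀ i, (N i).Normal]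
    {f : ∀ i, A i →* Q} {X : Type*} [AddCommGroup X] {F₁ F₂ : (⨁ i, InducedRel (N i) (f i)) →+ X}
    (h : ∀ i q (n : N i),
      F₁ (DirectSum.of _ i (Submodule.Quotient.mk
        (MonoidAlgebra.of ℤ Q q ⊗ₜ .ofMul (Abelianization.of n)))) =
      F₂ (DirectSum.of _ i (Submodule.Quotient.mk
        (MonoidAlgebra.of ℤ Q q ⊗ₜ .ofMul (Abelianization.of n))))) :
    F₁ = F₂ := by
  refine DirectSum.addHom_ext fun i y => ?_
  obtain ⟨v, rfl⟩ := Submodule.Quotient.mk_surjective _ y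
  induction v using TensorProduct.induction_on with
  | zero => simp only [Submodule.Quotient.mk_zero, map_zero]
  | add v w hv hw => simp only [Submodule.Quotient.mk_add, map_add, hv, hw]
  | tmul a m =>
    obtain ⟨n, rfl⟩ := Abelianization.exists_ofMul_of_eq m
    let L (F : (⨁ i, InducedRel (N i) (f i)) →+ X) : MonoidAlgebra ℤ Q →+ X :=
      (F.comp (DirectSum.of _ i)).comp ((relSub Q (A i) (N i) (f i)).mkQ.toAddMonoidHom.comp
        ((TensorProduct.mk ℤ _ _).flip (.ofMul (Abelianization.of n))).toAddMonoidHom)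
    have hL : L F₁ = L F₂ :=
      MonoidAlgebra.addHom_ext' fun q => AddMonoidHom.ext_int (h i q n)
    exact DFunLike.congr_fun hL a

section RelationModule

variable {G : Type*} [Group G] (K : Subgroup G) {A : Type*} [Group A] (f : A →* G)
  (N : Subgroup A) (hf : N.map f ≤ K)

noncomputable def inclAb : Additive (Abelianization N) →ₗ[ℤ] Additive (Abelianization K) :=
  (Abelianization.map ((f.comp N.subtype).codRestrict K
    fun n => hf ⟨n, n.2, rfl⟩)).toAdditive.toIntLinearMap

lemma inclAb_of (n : N) :
    inclAb K f N hf (.ofMul (Abelianization.of n)) =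
      .ofMul (Abelianization.of ⟨f n, hf ⟨n, n.2, rfl⟩⟩) :=
  rfl

variable [K.Normal] [N.Normal]

lemma inclAb_conjRep (h : A) (m : Additive (Abelianization N)) :
    inclAb K f N hf (conjRep N h m) = quotConjRep K (f h) (inclAb K f N hf m) := by
  obtain ⟨n, rfl⟩ := Abelianization.exists_ofMul_of_eq m
  rw [inclAb_of, conjRep_of, inclAb_of, quotConjRep_mk, conjRep_of]
  congr 2
  ext
  simp

end RelationModule

section SumInduced

variable {G : Type*} [Group G] (K : Subgroup G) [K.Normal] {ι : Type*} [DecidableEq ι]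
  {A : ι → Type*} [∀ i, Group (A i)] (f : ∀ i, A i →* G) (N : ∀ i, Subgroup (A i))
  [∀ i, (N i).Normal] (hf : ∀ i, (N i).map (f i) ≤ K)

noncomputable def sumInducedToRel :
    (⨁ i, InducedRel (N i) ((QuotientGroup.mk' K).comp (f i))) →ₗ[MonoidAlgebra ℤ (G ⧸ K)]
      (quotConjRep K).asModule :=
  DirectSum.toModule _ ι _ fun i => InducedRel.lift (inclAb_conjRep K (f i) (N i) (hf i))

lemma sumInducedToRel_of (i : ι) (a : MonoidAlgebra ℤ (G ⧸ K))
    (m : Additive (Abelianization (N i))) :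
    sumInducedToRel K f N hf (DirectSum.of _ i (Submodule.Quotient.mk (a ⊗ₜ m))) =
      a • (quotConjRep K).asModuleEquiv.symm (inclAb K (f i) (N i) (hf i) m) :=
  DirectSum.toModule_lof _ i _

theorem relModuleIsoIndFam_of_bijective
    (hbij : Function.Bijective (sumInducedToRel K f N hf)) : RelModuleIsoIndFam G f N K := by
  refine ⟨(quotConjRep K).asModuleEquiv.symm.toAddEquiv.trans
    (LinearEquiv.ofBijective _ hbij).symm.toAddEquiv, fun g x => ?_⟩
  change (LinearEquiv.ofBijective _ hbij).symm
      ((quotConjRep K).asModuleEquiv.symm (quotConjRep K g x)) = _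
  rw [Representation.asModuleEquiv_symm_map_rho, LinearEquiv.map_smul]
  rfl

end SumInduced

lemma exists_mem_mk_eq_mk_mul {G : Type*} [Group G] {K L : Subgroup G} [K.Normal] {T : Set G}
    (hT : ∀ g, ∃ t ∈ T, t⁻¹ * g ∈ L ⊔ K) (g : G) :
    ∃ t ∈ T, ∃ h ∈ L, (g : G ⧸ K) = (t * h : G) := by
  obtain ⟨t, ht, hmem⟩ := hT g
  rw [← SetLike.mem_coe, Subgroup.mul_normal] at hmem
  obtain ⟨h, hh, k, hk, hhk⟩ := hmem
  refine ⟨t, ht, h, hh, (QuotientGroup.eq.2 ?_).symm⟩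
  rwa [mul_inv_rev, mul_assoc, ← hhk, inv_mul_cancel_left]

section CohenLyndon

variable {G : Type*} [Group G] {ι : Type*} (H : ι → Subgroup G) (N : ∀ i, Subgroup (H i))
  (T : ι → Set G)

abbrev conjSubgroup (p : Σ i, T i) : Subgroup G :=
  ((N p.1).map (H p.1).subtype).map (MulAut.conj (p.2 : G)).toMonoidHom

noncomputable def conjSubgroupEquiv (p : Σ i, T i) : N p.1 ≃* conjSubgroup H N T p :=
  ((N p.1).equivMapOfInjective _ (H p.1).subtype_injective).trans
    (Subgroup.equivMapOfInjective _ _ (MulAut.conj (p.2 : G)).injective)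

abbrev conjFreeProdLift : Monoid.CoprodI (fun p => conjSubgroup H N T p) →* G :=
  Monoid.CoprodI.lift fun p => (conjSubgroup H N T p).subtype

variable {H N T} {K : Subgroup G} (hinj : Function.Injective (conjFreeProdLift H N T))
  (hrange : (conjFreeProdLift H N T).range = K)

noncomputable def conjFreeProdEquiv : Monoid.CoprodI (fun p => conjSubgroup H N T p) ≃* K :=
  (MonoidHom.ofInjective hinj).trans (MulEquiv.subgroupCongr hrange)

lemma coe_conjFreeProdEquiv_of (p : Σ i, T i) (x : conjSubgroup H N T p) :
    (conjFreeProdEquiv hinj hrange (Monoid.CoprodI.of x) : G) = x :=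
  Monoid.CoprodI.lift_of _ _

variable [DecidableEq ι] [∀ i, (N i).Normal] [K.Normal]

noncomputable def relToSumInduced :
    Additive (Abelianization K) →+
      ⨁ i, InducedRel (N i) ((QuotientGroup.mk' K).comp (H i).subtype) :=
  MonoidHom.toAdditiveLeft <| Abelianization.lift <|
    (Monoid.CoprodI.lift fun p => (AddMonoidHom.toMultiplicativeRight
      ((DirectSum.of _ p.1).comp
        ((relSub _ _ (N p.1) ((QuotientGroup.mk' K).comp (H p.1).subtype)).mkQ.toAddMonoidHom.comp
          (TensorProduct.mk ℤ _ _ (MonoidAlgebra.of ℤ (G ⧸ K) (p.2 : G))).toAddMonoidHom))).comp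
        (Abelianization.of.comp (conjSubgroupEquiv H N T p).symm.toMonoidHom)).comp
    (conjFreeProdEquiv hinj hrange).symm.toMonoidHom

lemma relToSumInduced_of (p : Σ i, T i) (x : conjSubgroup H N T p) :
    relToSumInduced hinj hrange
        (.ofMul (Abelianization.of (conjFreeProdEquiv hinj hrange (.of x)))) =
      DirectSum.of _ p.1 (Submodule.Quotient.mk (MonoidAlgebra.of ℤ (G ⧸ K) (p.2 : G) ⊗ₜ
        Additive.ofMul (Abelianization.of ((conjSubgroupEquiv H N T p).symm x)))) := by
  simp only [relToSumInduced, MulEquiv.toMonoidHom_eq_coe, MonoidHom.toAdditiveLeft_apply_apply,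
    toMul_ofMul, Abelianization.lift_apply_of, MonoidHom.coe_comp, MonoidHom.coe_coe,
    Function.comp_apply, MulEquiv.symm_apply_apply, Monoid.CoprodI.lift_of,
    AddMonoidHom.coe_toMultiplicativeRight, AddMonoidHom.coe_comp, LinearMap.toAddMonoidHom_coe,
    mk_apply, Submodule.mkQ_apply, toAdd_ofAdd]

variable (hf : ∀ i, (N i).map (H i).subtype ≤ K)

lemma sumInducedToRel_of_mk_tmul (p : Σ i, T i) (n : N p.1) :
    sumInducedToRel K (fun i => (H i).subtype) N hf (DirectSum.of _ p.1 (Submodule.Quotient.mk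
        (MonoidAlgebra.of ℤ (G ⧸ K) (p.2 : G) ⊗ₜ Additive.ofMul (Abelianization.of n)))) =
      (quotConjRep K).asModuleEquiv.symm (.ofMul (Abelianization.of
        (conjFreeProdEquiv hinj hrange (.of (conjSubgroupEquiv H N T p n))))) := by
  rw [sumInducedToRel_of, ← Representation.asModuleEquiv_symm_map_rho, quotConjRep_mk,
    inclAb_of, conjRep_of]
  exact congrArg (Additive.ofMul ∘ Abelianization.of)
    (Subtype.ext (coe_conjFreeProdEquiv_of hinj hrange p (conjSubgroupEquiv H N T p n)).symm)

lemma sumInducedToRel_relToSumInduced (x : Additive (Abelianization K)) :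
    sumInducedToRel K (fun i => (H i).subtype) N hf (relToSumInduced hinj hrange x) =
      (quotConjRep K).asModuleEquiv.symm x := by
  obtain ⟨k, rfl⟩ := Abelianization.exists_ofMul_of_eq x
  obtain ⟨w, rfl⟩ := (conjFreeProdEquiv hinj hrange).surjective k
  induction w using Monoid.CoprodI.induction_on with
  | one => simp
  | of x =>
    rw [relToSumInduced_of, sumInducedToRel_of_mk_tmul hinj hrange hf, MulEquiv.apply_symm_apply]
  | mul w₁ w₂ h₁ h₂ =>
    rw [map_mul, map_mul, ofMul_mul, map_add, map_add, h₁, h₂, map_add]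

lemma relToSumInduced_sumInducedToRel (hT : ∀ i g, ∃ t ∈ T i, t⁻¹ * g ∈ H i ⊔ K)
    (y : ⨁ i, InducedRel (N i) ((QuotientGroup.mk' K).comp (H i).subtype)) :
    relToSumInduced hinj hrange
      ((quotConjRep K).asModuleEquiv (sumInducedToRel K (fun i => (H i).subtype) N hf y)) = y := by
  refine DFunLike.congr_fun (sumInducedRel_addHom_ext (F₂ := .id _)
    (F₁ := (relToSumInduced hinj hrange).comp
      ((quotConjRep K).asModuleEquiv.toLinearMap.toAddMonoidHom.comp
        (sumInducedToRel K (fun i => (H i).subtype) N hf).toAddMonoidHom)) fun i q n => ?_) y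
  obtain ⟨g, rfl⟩ := QuotientGroup.mk_surjective q
  obtain ⟨t, ht, h, hh, hg⟩ := exists_mem_mk_eq_mk_mul (hT i) g
  have hrel : (Submodule.Quotient.mk (MonoidAlgebra.of ℤ (G ⧸ K) g ⊗ₜ
        Additive.ofMul (Abelianization.of n)) :
        InducedRel (N i) ((QuotientGroup.mk' K).comp (H i).subtype)) =
      Submodule.Quotient.mk (MonoidAlgebra.of ℤ (G ⧸ K) t ⊗ₜ
        Additive.ofMul (Abelianization.of (MulAut.conjNormal (⟨h, hh⟩ : H i) n))) := by
    rw [hg, QuotientGroup.mk_mul, map_mul]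
    exact InducedRel.mk_mul_of_tmul (N i) ((QuotientGroup.mk' K).comp (H i).subtype)
      (MonoidAlgebra.of ℤ (G ⧸ K) t) ⟨h, hh⟩ (.ofMul (Abelianization.of n))
  change relToSumInduced hinj hrange ((quotConjRep K).asModuleEquiv
    (sumInducedToRel K (fun i => (H i).subtype) N hf (DirectSum.of _ i _))) = _
  rw [hrel, sumInducedToRel_of_mk_tmul hinj hrange hf ⟨i, t, ht⟩, LinearEquiv.apply_symm_apply,
    relToSumInduced_of, MulEquiv.symm_apply_apply]
  rfl

theorem sumInducedToRel_bijective (hinj : Function.Injective (conjFreeProdLift H N T))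
    (hrange : (conjFreeProdLift H N T).range = K) (hT : ∀ i g, ∃ t ∈ T i, t⁻¹ * g ∈ H i ⊔ K) :
    Function.Bijective (sumInducedToRel K (fun i => (H i).subtype) N hf) :=
  Function.bijective_iff_has_inverse.2
    ⟨relToSumInduced hinj hrange ∘ (quotConjRep K).asModuleEquiv,
      relToSumInduced_sumInducedToRel hinj hrange hf hT, fun x => by
        simp only [Function.comp_apply, sumInducedToRel_relToSumInduced,
          LinearEquiv.symm_apply_apply]⟩

end CohenLyndon

end RelModule

theorem cohenLyndon_relModule_general {G : Type*} [Group G] {ι : Type*}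
    (H : ι → Subgroup G) (N : ∀ i, Subgroup ↥(H i)) [∀ i, (N i).Normal]
    (hCL : CohenLyndonFamily H (fun j => (N j).map (H j).subtype)) :
    RelModuleIsoIndFam G (fun j => (H j).subtype) N
      (familyNC (fun j => (N j).map (H j).subtype)) := by
  classical
  obtain ⟨T, hT, hinj, hrange⟩ := hCL
  have hf (i : ι) : (N i).map (H i).subtype ≤ familyNC (fun j => (N j).map (H j).subtype) :=
    (Set.subset_iUnion (fun j => ((N j).map (H j).subtype : Set G)) i).trans
      Subgroup.subset_normalClosure
  exact RelModule.relModuleIsoIndFam_of_bijective _ _ _ hf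
    (RelModule.sumInducedToRel_bijective hf hinj hrange fun i g => (hT i g).exists)

/-- **The Cohen–Lyndon property determines the relative relation module of a Dehn
filling.** Let `G` be a group, `{H i}` a family of subgroups of `G`, and for each `i` let
`N i` be a nontrivial normal subgroup of `H i`. Let `⟪N⟫` be the normal closure in `G` of
the union of the `N i`, `Q = G/⟪N⟫` and `R i = H i / N i`. If the triple
`(G, {H i}, {N i})` has the Cohen-Lyndon property, then
`Rel(G, ⟪N⟫) ≅ ⨁ i, ℤQ ⊗_{ℤR i} Rel(H i, N i)` as `ℤQ`-modules. -/
theorem cohenLyndon_relModule {G : Type*} [Group G] {ι : Type*}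
    (H : ι → Subgroup G) (N : ∀ i, Subgroup ↥(H i)) [∀ i, (N i).Normal]
    (hnt : ∀ i, N i ≠ ⊥)
    (hCL : CohenLyndonFamily H (fun j => (N j).map (H j).subtype)) :
    RelModuleIsoIndFam G (fun j => (H j).subtype) N
      (familyNC (fun j => (N j).map (H j).subtype)) :=
  cohenLyndon_relModule_general H N hCL
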